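/- arXiv:2412.05956 — 2 statements merged into one kernel-verified Lean document; each statement's English description precedes it below -/
import Mathlib

section
/- Let m ≥ 1 and 0 < k ≤ m. For the uncertainty set U = {h ∈ [0,1]^m : ∑ᵢ hᵢ ≤ k}, the set Û = β · conv(e₁, …, e_m, (k/m)·𝟏) with β = min(k, m/k) dominates U; that is, for every h ∈ U there exists ĥ ∈ Û with ĥ ≥ h componentwise. -/
/-!
Write `S = ∑ᵢ hᵢ ≤ k`. If `k ≤ m/k`, put weight `hᵢ/k` on `eᵢ` and the remaining mass `1 - S/k` on
`(k/m)·𝟏`; scaling by `k` returns `h` plus a nonnegative multiple of `𝟏`. If `m/k ≤ k`, the single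
point `(m/k)·(k/m)·𝟏 = 𝟏` already dominates the whole box `[0,1]^m`.
-/

open Pointwise

theorem sum_smul_add_smul_mem_convexHull_union {ι E : Type*} [Fintype ι] [AddCommGroup E]
    [Module ℝ E] (p : ι → E) (v : E) {w : ι → ℝ} (hw0 : ∀ i, 0 ≤ w i) (hw1 : ∑ i, w i ≤ 1) :
    ∑ i, w i • p i + (1 - ∑ i, w i) • v ∈ convexHull ℝ (Set.range p ∪ {v}) := by
  have hmem := (convex_convexHull ℝ (Set.range p ∪ {v})).sum_mem (t := Finset.univ)
    (w := fun o : Option ι => o.elim (1 - ∑ i, w i) w) (z := fun o => o.elim v p)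
    (fun o _ => by cases o <;> simp [hw0, hw1])
    (by simp [Fintype.sum_option])
    (fun o _ => subset_convexHull ℝ _ (by cases o <;> simp))
  simpa [Fintype.sum_option, add_comm] using hmem

theorem add_smul_mem_convexHull_single_union {ι : Type*} [Fintype ι] [DecidableEq ι]
    (v : ι → ℝ) {w : ι → ℝ} (hw0 : ∀ i, 0 ≤ w i) (hw1 : ∑ i, w i ≤ 1) :
    w + (1 - ∑ i, w i) • v ∈ convexHull ℝ (Set.range (fun i => (Pi.single i 1 : ι → ℝ)) ∪ {v}) := by
  have hw : ∑ i, w i • (Pi.single i 1 : ι → ℝ) = w := by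
    simp_rw [← Pi.single_smul', smul_eq_mul, mul_one, Finset.univ_sum_single]
  simpa only [hw] using
    sum_smul_add_smul_mem_convexHull_union (fun i => (Pi.single i 1 : ι → ℝ)) v hw0 hw1

theorem exists_ge_mem_smul_convexHull_single_union {ι : Type*} [Fintype ι] [DecidableEq ι]
    {v : ι → ℝ} (hv : 0 ≤ v) {k : ℝ} (hk : 0 < k) {h : ι → ℝ} (h0 : 0 ≤ h)
    (hsum : ∑ i, h i ≤ k) :
    ∃ hhat ∈ k • convexHull ℝ (Set.range (fun i => (Pi.single i 1 : ι → ℝ)) ∪ {v}), h ≤ hhat := by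
  set t := 1 - ∑ i, (k⁻¹ • h) i
  have ht : 0 ≤ t := by
    simp only [t, Pi.smul_apply, smul_eq_mul, ← Finset.mul_sum, sub_nonneg]
    exact inv_mul_le_one_of_le₀ hsum hk.le
  refine ⟨k • (k⁻¹ • h + t • v), Set.smul_mem_smul_set ?_, ?_⟩
  · refine add_smul_mem_convexHull_single_union v (fun i => ?_) ?_
    · exact smul_nonneg (inv_nonneg.2 hk.le) (h0 i)
    · simpa only [t, sub_nonneg] using ht
  · rw [smul_add, smul_inv_smul₀ hk.ne']
    exact le_add_of_nonneg_right (smul_nonneg hk.le (smul_nonneg ht hv))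

theorem scaled_hull_dominates_budget_box_general
    (m : ℕ) (k : ℝ) (hk0 : 0 < k)
    (U : Set (Fin m → ℝ))
    (hU : U = {h : Fin m → ℝ | (∀ i, h i ∈ Set.Icc (0 : ℝ) 1) ∧ ∑ i, h i ≤ k})
    (β : ℝ) (hβ : β = min k ((m : ℝ) / k))
    (Uhat : Set (Fin m → ℝ))
    (hUhat : Uhat = β • convexHull ℝ
      (Set.range (fun i : Fin m => (Pi.single i 1 : Fin m → ℝ)) ∪
        {fun _ : Fin m => k / m})) :
    ∀ h ∈ U, ∃ hhat ∈ Uhat, ∀ i, h i ≤ hhat i := by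
  subst hU hβ hUhat
  rintro h ⟨hbox, hsum⟩
  rcases le_total k ((m : ℝ) / k) with hβ | hβ
  · rw [min_eq_left hβ]
    have hv : (0 : Fin m → ℝ) ≤ fun _ => k / m := fun _ => by positivity
    exact exists_ge_mem_smul_convexHull_single_union hv hk0 (fun i => (hbox i).1) hsum
  · rw [min_eq_right hβ]
    refine ⟨((m : ℝ) / k) • fun _ => k / m,
      Set.smul_mem_smul_set (subset_convexHull ℝ _ (Or.inr rfl)), fun i => ?_⟩
    have hm : (m : ℝ) ≠ 0 := by exact_mod_cast i.pos.ne'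
    have hone : ((m : ℝ) / k) * (k / m) = 1 := by field_simp
    simpa [hone] using (hbox i).2

/-- the scaled convex hull `β • conv(e₁, …, e_m, (k/m)·𝟏)` with
`β = min(k, m/k)` dominates the box-with-budget uncertainty set
`U = {h ∈ [0,1]^m : ∑ᵢ hᵢ ≤ k}`. -/
theorem scaled_hull_dominates_budget_box
    (m : ℕ) (hm : 1 ≤ m) (k : ℝ) (hk0 : 0 < k) (hkm : k ≤ m)
    (U : Set (Fin m → ℝ))
    (hU : U = {h : Fin m → ℝ | (∀ i, h i ∈ Set.Icc (0 : ℝ) 1) ∧ ∑ i, h i ≤ k})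
    (β : ℝ) (hβ : β = min k ((m : ℝ) / k))
    (Uhat : Set (Fin m → ℝ))
    (hUhat : Uhat = β • convexHull ℝ
      (Set.range (fun i : Fin m => (Pi.single i 1 : Fin m → ℝ)) ∪
        {fun _ : Fin m => k / m})) :
    ∀ h ∈ U, ∃ hhat ∈ Uhat, ∀ i, h i ≤ hhat i :=
  scaled_hull_dominates_budget_box_general m k hk0 U hU β hβ Uhat hUhat
end

section
/- Let s₁ ≤ s₂ ≤ … ≤ s_M be i.i.d. real-valued scores drawn from a continuous distribution P, and let s be a fresh independent draw from P. If q is the ⌈(M+1)(1−α)⌉-th smallest of the M calibration scores (with α ∈ (0,1) such that ⌈(M+1)(1−α)⌉ ≤ M), then 1 − α ≤ P(s ≤ q) ≤ 1 − α + 1/(M+1). -/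
open MeasureTheory ProbabilityTheory Finset

/-!
Write `T = (S₀, …, S_M)` and `rank x i = #{j | x j < x i}`. Since `q` is the `k`-th smallest
calibration score, `S_M ≤ q` exactly when fewer than `k` calibration scores lie below `S_M`, i.e.
when `rank T M < k`. The law of `T` is a product measure, hence invariant under permutations of
the coordinates, so `P(rank T i < k)` does not depend on `i`; and since the common law has no
atoms, `T` is almost surely injective, in which case exactly `k` indices have rank `< k`. Summing
over `i` gives `P(S_M ≤ q) = k / (M + 1)`, and `k = ⌈(M + 1)(1 - α)⌉` gives the two bounds.
-/

section Rank

variable {ι α : Type*} [Fintype ι] [LinearOrder α]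

def rank (x : ι → α) (i : ι) : ℕ := #{j | x j < x i}

lemma rank_comp_perm (x : ι → α) (σ : Equiv.Perm ι) (i : ι) :
    rank (x ∘ σ) i = rank x (σ i) := by
  simp only [rank, card_filter, Function.comp_apply]
  exact Equiv.sum_comp σ fun j => if x j < x (σ i) then 1 else 0

lemma rank_lt_card (x : ι → α) (i : ι) : rank x i < Fintype.card ι :=
  card_lt_card <| filter_ssubset.2 ⟨i, mem_univ i, lt_irrefl _⟩

lemma rank_lt_rank {x : ι → α} {i j : ι} (hij : x i < x j) : rank x i < rank x j :=
  card_lt_card <| (ssubset_iff_of_subset fun l hl => by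
      simp only [mem_filter, mem_univ, true_and] at hl ⊢; exact hl.trans hij).2
    ⟨i, by simpa using hij, by simp⟩

lemma rank_injective {x : ι → α} (hx : Function.Injective x) : Function.Injective (rank x) := by
  intro i j h
  rcases lt_trichotomy (x i) (x j) with hlt | heq | hgt
  · exact absurd h (rank_lt_rank hlt).ne
  · exact hx heq
  · exact absurd h (rank_lt_rank hgt).ne'

lemma image_rank_univ {x : ι → α} (hx : Function.Injective x) :
    univ.image (rank x) = range (Fintype.card ι) :=
  eq_of_subset_of_card_le (fun _ hr => by
      obtain ⟨i, -, rfl⟩ := mem_image.1 hr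
      exact mem_range.2 (rank_lt_card x i))
    (by rw [card_range, card_image_of_injective _ (rank_injective hx), card_univ])

lemma card_rank_lt {x : ι → α} (hx : Function.Injective x) {k : ℕ}
    (hk : k ≤ Fintype.card ι) :
    #{i | rank x i < k} = k := by
  have hrange : {r ∈ range (Fintype.card ι) | r < k} = range k := by
    ext r; simp only [mem_filter, mem_range]; omega
  rw [← card_image_of_injective _ (rank_injective hx), ← filter_image (p := (· < k)),
    image_rank_univ hx, hrange, card_range]

end Rank

lemma rank_last {α : Type*} [LinearOrder α] {n : ℕ} (x : Fin (n + 1) → α) :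
    rank x (Fin.last n) = #{j : Fin n | x j.castSucc < x (Fin.last n)} := by
  simp only [rank, card_filter, Fin.sum_univ_castSucc, lt_irrefl, if_false, add_zero]

lemma List.countP_ofFn {α : Type*} {n : ℕ} (f : Fin n → α) (p : α → Bool) :
    (List.ofFn f).countP p = #{i | p (f i)} := by
  induction n with
  | zero => simp
  | succ n ih =>
    rw [List.ofFn_succ, List.countP_cons, ih, Fin.card_filter_univ_succ']
    simp [add_comm]

lemma List.le_getElem_iff_countP_le {α : Type*} [LinearOrder α] {l : List α}
    (hl : l.Pairwise (· ≤ ·)) {n : ℕ} (hn : n < l.length) (t : α) :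
    t ≤ l[n] ↔ l.countP (· < t) ≤ n := by
  induction l generalizing n with
  | nil => simp at hn
  | cons a l ih =>
    obtain ⟨ha, hl⟩ := List.pairwise_cons.1 hl
    by_cases hat : a < t
    · cases n with
      | zero => simp [hat]
      | succ n => simp [ih hl (by simpa using hn), hat]
    · have hta : t ≤ a := not_lt.1 hat
      have hle : ∀ b ∈ l, t ≤ b := fun b hb => hta.trans (ha b hb)
      have hzero : l.countP (· < t) = 0 :=
        List.countP_eq_zero.2 fun b hb => by simpa using hle b hb
      cases n with
      | zero => simp [hzero, hta]
      | succ n => simp [hzero, hat, hle _ (List.getElem_mem _)]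

lemma le_getD_insertionSort_ofFn_iff {α : Type*} [LinearOrder α] {n : ℕ} (y : Fin n → α)
    {m : ℕ} (hm : m < n) (t d : α) :
    t ≤ (List.ofFn y |>.insertionSort (· ≤ ·)).getD m d ↔ #{j | y j < t} ≤ m := by
  have hperm := List.perm_insertionSort (· ≤ ·) (List.ofFn y)
  have hlen : m < (List.ofFn y |>.insertionSort (· ≤ ·)).length := by simpa [hperm.length_eq]
  rw [List.getD_eq_getElem _ _ hlen,
    List.le_getElem_iff_countP_le (List.pairwise_insertionSort _ _) hlen, hperm.countP_eq,
    List.countP_ofFn]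
  simp

lemma measurePreserving_comp_perm {ι β : Type*} [Fintype ι] [MeasurableSpace β]
    (ρ : Measure β) [SigmaFinite ρ] (σ : Equiv.Perm ι) :
    MeasurePreserving (fun x : ι → β => x ∘ σ)
      (Measure.pi fun _ => ρ) (Measure.pi fun _ => ρ) := by
  convert measurePreserving_piCongrLeft (fun _ => ρ) σ.symm using 1
  ext x i
  simpa using (MeasurableEquiv.piCongrLeft_apply_apply (β := fun _ => β) σ.symm x (σ i)).symm

lemma ProbabilityTheory.IndepFun.measure_eq_eq_zero {Ω β : Type*} [MeasurableSpace Ω]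
    [MeasurableSpace β] [MeasurableEq β] {μ : Measure Ω} [IsFiniteMeasure μ] {X Y : Ω → β}
    (hXY : IndepFun X Y μ) (hX : Measurable X) (hY : Measurable Y)
    [NullSingletonClass (μ.map Y)] :
    μ {ω | X ω = Y ω} = 0 := by
  have hdiag : MeasurableSet {p : β × β | p.1 = p.2} := measurableSet_diagonal
  calc μ {ω | X ω = Y ω} = μ.map (fun ω => (X ω, Y ω)) {p | p.1 = p.2} :=
        (Measure.map_apply (hX.prodMk hY) hdiag).symm
    _ = ((μ.map X).prod (μ.map Y)) {p | p.1 = p.2} := by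
        rw [(indepFun_iff_map_prod_eq_prod_map_map hX.aemeasurable hY.aemeasurable).1 hXY]
    _ = 0 := by
        rw [Measure.prod_apply hdiag]
        simp [Set.preimage]

lemma ae_injective_pi {ι β : Type*} [Fintype ι] [MeasurableSpace β] [MeasurableEq β]
    (ρ : Measure β) [IsProbabilityMeasure ρ] [NullSingletonClass ρ] :
    ∀ᵐ x ∂(Measure.pi fun _ : ι => ρ), Function.Injective x := by
  have hcoord : iIndepFun (fun i (x : ι → β) => x i) (Measure.pi fun _ => ρ) :=
    iIndepFun_pi (X := fun _ => id) fun _ => aemeasurable_id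
  have hne : ∀ i j, ∀ᵐ x ∂(Measure.pi fun _ : ι => ρ), x i = x j → i = j := by
    intro i j
    by_cases hij : i = j
    · exact ae_of_all _ fun _ _ => hij
    have : NullSingletonClass ((Measure.pi fun _ : ι => ρ).map fun x => x j) := by
      rw [(measurePreserving_eval _ j).map_eq]; infer_instance
    filter_upwards [measure_eq_zero_iff_ae_notMem.1 ((hcoord.indepFun hij).measure_eq_eq_zero
      (measurable_pi_apply i) (measurable_pi_apply j))] with x hx hxij
    exact absurd hxij hx
  filter_upwards [ae_all_iff.2 fun i => ae_all_iff.2 (hne i)] with x hx i j using hx i j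

section RankMeasure

variable {ι : Type*} [Fintype ι]

lemma measurableSet_rank_lt (i : ι) (k : ℕ) : MeasurableSet {x : ι → ℝ | rank x i < k} := by
  have : Measurable fun x : ι → ℝ => rank x i := by
    simp only [rank, card_filter]
    exact Finset.measurable_sum _ fun j _ => Measurable.ite
      (measurableSet_lt (measurable_pi_apply j) (measurable_pi_apply i)) measurable_const
      measurable_const
  exact this measurableSet_Iio

lemma measure_pi_rank_lt_eq_measure_pi_rank_lt (ρ : Measure ℝ) [SigmaFinite ρ] (i j : ι)
    (k : ℕ) :
    (Measure.pi fun _ : ι => ρ) {x | rank x i < k} =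
      (Measure.pi fun _ : ι => ρ) {x | rank x j < k} := by
  classical
  have hpre : (fun x : ι → ℝ => x ∘ Equiv.swap i j) ⁻¹' {x | rank x j < k} =
      {x | rank x i < k} := by
    ext x
    simp [rank_comp_perm]
  rw [← hpre, (measurePreserving_comp_perm ρ _).measure_preimage
    (measurableSet_rank_lt j k).nullMeasurableSet]

lemma sum_measure_rank_lt {ν : Measure (ι → ℝ)} [IsProbabilityMeasure ν]
    (hν : ∀ᵐ x ∂ν, Function.Injective x) {k : ℕ} (hk : k ≤ Fintype.card ι) :
    ∑ i, ν {x | rank x i < k} = k := by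
  calc ∑ i, ν {x | rank x i < k}
      = ∑ i, ∫⁻ x, {x | rank x i < k}.indicator 1 x ∂ν := by
        simp only [lintegral_indicator_one (measurableSet_rank_lt _ _)]
    _ = ∫⁻ x, ∑ i, {x : ι → ℝ | rank x i < k}.indicator 1 x ∂ν :=
        (lintegral_finsetSum _ fun i _ =>
          measurable_one.indicator (measurableSet_rank_lt i k)).symm
    _ = ∫⁻ _, (k : ENNReal) ∂ν := lintegral_congr_ae <| hν.mono fun x hx => by
        simp only [Set.indicator_apply, Set.mem_ofPred_eq, Pi.one_apply, sum_boole,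
          card_rank_lt hx hk]
    _ = k := by simp

lemma measure_pi_rank_lt (ρ : Measure ℝ) [IsProbabilityMeasure ρ] [NullSingletonClass ρ]
    (i : ι) {k : ℕ} (hk : k ≤ Fintype.card ι) :
    (Measure.pi fun _ : ι => ρ) {x | rank x i < k} = k / Fintype.card ι := by
  have hsum := sum_measure_rank_lt (ae_injective_pi ρ) hk
  simp only [measure_pi_rank_lt_eq_measure_pi_rank_lt ρ _ i, sum_const, card_univ,
    nsmul_eq_mul] at hsum
  exact (ENNReal.eq_div_iff (by simpa using (Fintype.card_pos_iff.2 ⟨i⟩).ne') (by simp)).2 hsum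

end RankMeasure

lemma le_natCeil_mul_div {N : ℝ} (hN : 0 < N) (p : ℝ) : p ≤ ⌈N * p⌉₊ / N := by
  rw [le_div_iff₀ hN, mul_comm]
  exact Nat.le_ceil _

lemma natCeil_mul_div_le {N p : ℝ} (hN : 0 < N) (hp : 0 ≤ p) :
    ⌈N * p⌉₊ / N ≤ p + 1 / N := by
  rw [div_le_iff₀ hN, add_mul, one_div_mul_cancel hN.ne', mul_comm]
  exact (Nat.ceil_lt_add_one (by positivity)).le

theorem split_conformal_coverage_general
    {Ω : Type*} [MeasurableSpace Ω] (μ : Measure Ω) [IsProbabilityMeasure μ]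
    (M : ℕ) (S : Fin (M + 1) → Ω → ℝ)
    (hmeas : ∀ i, Measurable (S i))
    (hindep : iIndepFun S μ)
    (hident : ∀ i j, IdentDistrib (S i) (S j) μ μ)
    (hcont : ∀ x : ℝ, μ {ω | S 0 ω = x} = 0)
    (α : ℝ) (hα : α ∈ Set.Ioo (0 : ℝ) 1)
    (hk : ⌈((M : ℝ) + 1) * (1 - α)⌉₊ ≤ M)
    (q : Ω → ℝ)
    (hq : ∀ ω, q ω =
      (List.insertionSort (· ≤ ·) (List.ofFn fun i : Fin M => S i.castSucc ω)).getD
        (⌈((M : ℝ) + 1) * (1 - α)⌉₊ - 1) 0) :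
    1 - α ≤ (μ {ω | S (Fin.last M) ω ≤ q ω}).toReal ∧
    (μ {ω | S (Fin.last M) ω ≤ q ω}).toReal ≤ 1 - α + 1 / ((M : ℝ) + 1) := by
  set k := ⌈((M : ℝ) + 1) * (1 - α)⌉₊
  have hk_pos : 0 < k := Nat.ceil_pos.2 (mul_pos (by positivity) (by linarith [hα.2]))
  have hevent : {ω | S (Fin.last M) ω ≤ q ω} =
      (fun ω i => S i ω) ⁻¹' {x | rank x (Fin.last M) < k} := by
    ext ω
    simp only [Set.mem_ofPred_eq, Set.mem_preimage, hq,
      le_getD_insertionSort_ofFn_iff _ (by omega : k - 1 < M), rank_last]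
    omega
  have hlaw : μ.map (fun ω i => S i ω) = Measure.pi fun _ => μ.map (S 0) := by
    simp_rw [hindep.map_fun_eq_pi_map fun i => (hmeas i).aemeasurable,
      fun i => (hident i 0).map_eq]
  have := Measure.isProbabilityMeasure_map (μ := μ) (hmeas 0).aemeasurable
  have : NullSingletonClass (μ.map (S 0)) :=
    ⟨fun x => by rw [Measure.map_apply (hmeas 0) (measurableSet_singleton x)]; exact hcont x⟩
  have hcoverage : μ {ω | S (Fin.last M) ω ≤ q ω} = k / (M + 1) := by
    rw [hevent, ← Measure.map_apply (measurable_pi_lambda _ hmeas) (measurableSet_rank_lt _ _),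
      hlaw, measure_pi_rank_lt _ _ (by simpa using hk.trans M.le_succ)]
    simp
  have hN : (0 : ℝ) < M + 1 := by positivity
  rw [hcoverage, ENNReal.toReal_div]
  exact ⟨le_natCeil_mul_div hN _, natCeil_mul_div_le hN (by linarith [hα.2])⟩

/-- split conformal coverage. If `q` is the `⌈(M+1)(1−α)⌉`-th smallest
of `M` i.i.d. continuous calibration scores and `s` is a fresh independent draw,
then `1 − α ≤ P(s ≤ q) ≤ 1 − α + 1/(M+1)`. -/
theorem split_conformal_coverage
    {Ω : Type*} [MeasurableSpace Ω] (μ : Measure Ω) [IsProbabilityMeasure μ]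
    (M : ℕ) (hM : 1 ≤ M) (S : Fin (M + 1) → Ω → ℝ)
    (hmeas : ∀ i, Measurable (S i))
    (hindep : iIndepFun S μ)
    (hident : ∀ i j, IdentDistrib (S i) (S j) μ μ)
    (hcont : ∀ x : ℝ, μ {ω | S 0 ω = x} = 0)
    (α : ℝ) (hα : α ∈ Set.Ioo (0 : ℝ) 1)
    (hk : ⌈((M : ℝ) + 1) * (1 - α)⌉₊ ≤ M)
    (q : Ω → ℝ)
    (hq : ∀ ω, q ω =
      (List.insertionSort (· ≤ ·) (List.ofFn fun i : Fin M => S i.castSucc ω)).getD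
        (⌈((M : ℝ) + 1) * (1 - α)⌉₊ - 1) 0) :
    1 - α ≤ (μ {ω | S (Fin.last M) ω ≤ q ω}).toReal ∧
    (μ {ω | S (Fin.last M) ω ≤ q ω}).toReal ≤ 1 - α + 1 / ((M : ℝ) + 1) :=
  split_conformal_coverage_general μ M S hmeas hindep hident hcont α hα hk q hq
end
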